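/- Let 𝒞 be a finite set of closed intervals on ℝ and k ≥ 0 an integer. Define r_opt = min over all sets S ⊂ ℝ of size k of max_{C ∈ 𝒞} dist(C, S). Then either r_opt = 0, or r_opt = dist(C, C')/2 for some pair of intervals C, C' ∈ 𝒞. -/

import Mathlib

/-!
Fix an optimal set `S` of `k` centres. Among the pairs of intervals that lie within `ropt` of a
common centre, take one, `(I, J)`, of largest gap `g`; then `g ≤ 2 * ropt`. Conversely, in each
cluster of intervals served by one centre all gaps are at most `g`, so the point
`max (left endpoints) - g / 2` serves the whole cluster within `g / 2`. This gives `k` centres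
of radius `g / 2`, whence `ropt = g / 2`.
-/

open Metric

/-- The distance between `[I.1, I.2]` and `[J.1, J.2]`, provided both are nonempty. -/
def intervalGap (I J : ℝ × ℝ) : ℝ := max (J.1 - I.2) (max (I.1 - J.2) 0)

def Covers (S : Finset ℝ) (𝒞 : Finset (ℝ × ℝ)) (r : ℝ) : Prop :=
  ∀ I ∈ 𝒞, ∃ s ∈ S, infDist s (Set.Icc I.1 I.2) ≤ r

lemma intervalGap_nonneg (I J : ℝ × ℝ) : 0 ≤ intervalGap I J :=
  le_max_of_le_right (le_max_right _ _)

lemma infDist_Icc_le_iff {a b s r : ℝ} (hab : a ≤ b) (hr : 0 ≤ r) :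
    infDist s (Set.Icc a b) ≤ r ↔ a - r ≤ s ∧ s ≤ b + r := by
  constructor
  · intro h
    obtain ⟨y, ⟨hay, hyb⟩, hy⟩ := isCompact_Icc.exists_infDist_eq_dist (Set.nonempty_Icc.2 hab) s
    rw [hy, Real.dist_eq, abs_le] at h
    constructor <;> linarith
  · rintro ⟨hs₁, hs₂⟩
    have hproj := (Set.projIcc a b hab s).2
    refine (infDist_le_dist_of_mem hproj).trans ?_
    rw [Set.coe_projIcc, Real.dist_eq, abs_le]
    constructor <;> cases max_cases a (min b s) <;> cases min_cases b s <;> linarith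

lemma intervalGap_le_of_infDist_le {I J : ℝ × ℝ} {s r : ℝ} (hI : I.1 ≤ I.2) (hJ : J.1 ≤ J.2)
    (hsI : infDist s (Set.Icc I.1 I.2) ≤ r) (hsJ : infDist s (Set.Icc J.1 J.2) ≤ r) :
    intervalGap I J ≤ 2 * r := by
  have hr : 0 ≤ r := infDist_nonneg.trans hsI
  rw [infDist_Icc_le_iff hI hr] at hsI
  rw [infDist_Icc_le_iff hJ hr] at hsJ
  unfold intervalGap
  refine max_le ?_ (max_le ?_ ?_) <;> linarith

lemma exists_infDist_Icc_le_of_intervalGap_le {𝒦 : Finset (ℝ × ℝ)} {r : ℝ}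
    (hval : ∀ I ∈ 𝒦, I.1 ≤ I.2) (hr : 0 ≤ r)
    (hgap : ∀ I ∈ 𝒦, ∀ J ∈ 𝒦, intervalGap I J ≤ 2 * r) :
    ∃ t : ℝ, ∀ I ∈ 𝒦, infDist t (Set.Icc I.1 I.2) ≤ r := by
  rcases 𝒦.eq_empty_or_nonempty with rfl | h𝒦
  · simp
  obtain ⟨J, hJ, hJmax⟩ := 𝒦.exists_max_image Prod.fst h𝒦
  refine ⟨J.1 - r, fun I hI => (infDist_Icc_le_iff (hval I hI) hr).2 ⟨?_, ?_⟩⟩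
  · linarith [hJmax I hI]
  · linarith [le_max_left (J.1 - I.2) _ |>.trans (hgap I hI J hJ)]

lemma exists_covers_of_intervalGap_le {𝒞 : Finset (ℝ × ℝ)} {S : Finset ℝ} {k : ℕ} {ρ r : ℝ}
    (hval : ∀ I ∈ 𝒞, I.1 ≤ I.2) (hr : 0 ≤ r) (hk : S.card ≤ k) (hS : Covers S 𝒞 ρ)
    (hgap : ∀ s ∈ S, ∀ I ∈ 𝒞, ∀ J ∈ 𝒞, infDist s (Set.Icc I.1 I.2) ≤ ρ →
      infDist s (Set.Icc J.1 J.2) ≤ ρ → intervalGap I J ≤ 2 * r) :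
    ∃ T : Finset ℝ, T.card = k ∧ Covers T 𝒞 r := by
  classical
  have hcluster : ∀ s ∈ S, ∃ t : ℝ,
      ∀ I ∈ 𝒞.filter (fun I => infDist s (Set.Icc I.1 I.2) ≤ ρ),
        infDist t (Set.Icc I.1 I.2) ≤ r := by
    intro s hs
    refine exists_infDist_Icc_le_of_intervalGap_le (fun I hI => hval I (Finset.mem_filter.1 hI).1)
      hr fun I hI J hJ => ?_
    rw [Finset.mem_filter] at hI hJ
    exact hgap s hs I hI.1 J hJ.1 hI.2 hJ.2
  choose t ht using hcluster
  obtain ⟨T, hST, hT⟩ := Infinite.exists_superset_card_eq (S.attach.image fun s => t s.1 s.2) k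
    (Finset.card_image_le.trans (S.card_attach.symm ▸ hk))
  refine ⟨T, hT, fun I hI => ?_⟩
  obtain ⟨s, hs, hsI⟩ := hS I hI
  exact ⟨t s hs, hST (Finset.mem_image_of_mem _ (Finset.mem_attach S ⟨s, hs⟩)),
    ht s hs I (Finset.mem_filter.2 ⟨hI, hsI⟩)⟩

theorem stmt_14_general
    (𝒞 : Finset (ℝ × ℝ)) (h𝒞 : 𝒞.Nonempty) (hval : ∀ I ∈ 𝒞, I.1 ≤ I.2)
    (k : ℕ)
    (ropt : ℝ)
    (hopt : IsLeast {x : ℝ | ∃ S : Finset ℝ, S.card = k ∧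
      ∀ I ∈ 𝒞, ∃ s ∈ S, infDist s (Set.Icc I.1 I.2) ≤ x} ropt) :
    ropt = 0 ∨ ∃ I ∈ 𝒞, ∃ J ∈ 𝒞,
      ropt = max (J.1 - I.2) (max (I.1 - J.2) 0) / 2 := by
  classical
  obtain ⟨⟨S, hScard, hS⟩, hleast⟩ := hopt
  obtain ⟨I₀, hI₀⟩ := h𝒞
  set P := (𝒞 ×ˢ 𝒞).filter fun p : (ℝ × ℝ) × (ℝ × ℝ) => ∃ s ∈ S,
    infDist s (Set.Icc p.1.1 p.1.2) ≤ ropt ∧ infDist s (Set.Icc p.2.1 p.2.2) ≤ ropt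
  have hPne : P.Nonempty := by
    obtain ⟨s, hs, hsI₀⟩ := hS I₀ hI₀
    exact ⟨(I₀, I₀), Finset.mem_filter.2 ⟨Finset.mem_product.2 ⟨hI₀, hI₀⟩, s, hs, hsI₀, hsI₀⟩⟩
  obtain ⟨⟨I, J⟩, hIJ, hmax⟩ := P.exists_max_image (fun p => intervalGap p.1 p.2) hPne
  obtain ⟨hmem, s, hs, hsI, hsJ⟩ := Finset.mem_filter.1 hIJ
  rw [Finset.mem_product] at hmem
  have hle : intervalGap I J ≤ 2 * ropt :=
    intervalGap_le_of_infDist_le (hval I hmem.1) (hval J hmem.2) hsI hsJ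
  have hge : ropt ≤ intervalGap I J / 2 := by
    refine hleast (exists_covers_of_intervalGap_le hval (by linarith [intervalGap_nonneg I J])
      hScard.le hS fun s hs I' hI' J' hJ' hsI' hsJ' => ?_)
    have hpair : (I', J') ∈ P :=
      Finset.mem_filter.2 ⟨Finset.mem_product.2 ⟨hI', hJ'⟩, s, hs, hsI', hsJ'⟩
    linarith [hmax (I', J') hpair]
  exact Or.inr ⟨I, hmem.1, J, hmem.2,
    show ropt = intervalGap I J / 2 from le_antisymm hge (by linarith)⟩

theorem stmt_14
    (𝒞 : Finset (ℝ × ℝ)) (h𝒞 : 𝒞.Nonempty) (hval : ∀ I ∈ 𝒞, I.1 ≤ I.2)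
    (k : ℕ) (hk : 1 ≤ k)
    (ropt : ℝ)
    (hopt : IsLeast {x : ℝ | ∃ S : Finset ℝ, S.card = k ∧
      ∀ I ∈ 𝒞, ∃ s ∈ S, infDist s (Set.Icc I.1 I.2) ≤ x} ropt) :
    ropt = 0 ∨ ∃ I ∈ 𝒞, ∃ J ∈ 𝒞,
      ropt = max (J.1 - I.2) (max (I.1 - J.2) 0) / 2 :=
  stmt_14_general 𝒞 h𝒞 hval k ropt hopt
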